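/- Let $p \geq 2$, $\delta \in [0,1]$, $d, k \in \mathbb{N}$. There exists $C_\Sigma = C_\Sigma(p, d, k) > 0$ such that for all vectors $a_1, \dots, a_k \in \mathbb{R}^d$: $\sum_{j=1}^k \sum_{l=1}^{j-1} G_{p,\delta}(a_j, a_j - a_l) \leq C_\Sigma \sum_{j=1}^{k-1} \min_{1 \leq m \leq k} G_{p,\delta}(a_m, a_{j+1} - a_j)$. -/
import Mathlib


/-- The weight function `G_{p,δ}(x,y) = |y|² [(|x|+|y|)^δ (1+|x|+|y|)^{1-δ}]^{p-2}`
(equal to `0` when `|x|+|y| = 0`). -/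
noncomputable def Gpd (p δ : ℝ) {d : ℕ} (x y : EuclideanSpace ℝ (Fin d)) : ℝ :=
  ‖y‖ ^ 2 * ((‖x‖ + ‖y‖) ^ δ * (1 + ‖x‖ + ‖y‖) ^ (1 - δ)) ^ (p - 2)

lemma Gpd_nonneg (p δ : ℝ) {d : ℕ} (x y : EuclideanSpace ℝ (Fin d)) :
    0 ≤ Gpd p δ x y := by
  unfold Gpd; positivity

/-- Scaling lemma: if `‖y‖ ≤ K‖z‖` and `‖x‖+‖y‖ ≤ K(‖x'‖+‖z‖)` with `K ≥ 1`, then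
`G(x,y) ≤ K^p G(x',z)`. -/
lemma Gpd_le_mul (p δ : ℝ) (hp : 2 ≤ p) (hδ0 : 0 ≤ δ) (hδ1 : δ ≤ 1) {d : ℕ}
    (x y x' z : EuclideanSpace ℝ (Fin d)) (K : ℝ) (hK : 1 ≤ K)
    (hy : ‖y‖ ≤ K * ‖z‖) (hx : ‖x‖ + ‖y‖ ≤ K * (‖x'‖ + ‖z‖)) :
    Gpd p δ x y ≤ K ^ p * Gpd p δ x' z := by
  have hK0 : (0:ℝ) < K := lt_of_lt_of_le one_pos hK
  set s : ℝ := ‖x‖ + ‖y‖ with hs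
  set t : ℝ := ‖x'‖ + ‖z‖ with ht
  have hs0 : 0 ≤ s := by positivity
  have ht0 : 0 ≤ t := by positivity
  have hF : s ^ δ * (1 + s) ^ (1 - δ) ≤ K * (t ^ δ * (1 + t) ^ (1 - δ)) := by
    have h1 : s ^ δ ≤ (K * t) ^ δ := Real.rpow_le_rpow hs0 hx hδ0
    have h2 : (1 + s) ^ (1 - δ) ≤ (K * (1 + t)) ^ (1 - δ) := by
      apply Real.rpow_le_rpow (by positivity) _ (by linarith)
      nlinarith
    calc s ^ δ * (1 + s) ^ (1 - δ)
        ≤ (K * t) ^ δ * (K * (1 + t)) ^ (1 - δ) := by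
          apply mul_le_mul h1 h2 (Real.rpow_nonneg (by positivity) _)
            (Real.rpow_nonneg (by positivity) _)
      _ = (K ^ δ * K ^ (1 - δ)) * (t ^ δ * (1 + t) ^ (1 - δ)) := by
          rw [Real.mul_rpow hK0.le ht0, Real.mul_rpow hK0.le (by positivity)]; ring
      _ = K * (t ^ δ * (1 + t) ^ (1 - δ)) := by
          rw [← Real.rpow_add hK0]; norm_num
  have hFs : (0:ℝ) ≤ s ^ δ * (1 + s) ^ (1 - δ) := by positivity
  have hFt : (0:ℝ) ≤ t ^ δ * (1 + t) ^ (1 - δ) := by positivity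
  have hpow : (s ^ δ * (1 + s) ^ (1 - δ)) ^ (p - 2)
      ≤ K ^ (p - 2) * (t ^ δ * (1 + t) ^ (1 - δ)) ^ (p - 2) := by
    calc (s ^ δ * (1 + s) ^ (1 - δ)) ^ (p - 2)
        ≤ (K * (t ^ δ * (1 + t) ^ (1 - δ))) ^ (p - 2) :=
          Real.rpow_le_rpow hFs hF (by linarith)
      _ = K ^ (p - 2) * (t ^ δ * (1 + t) ^ (1 - δ)) ^ (p - 2) :=
          Real.mul_rpow hK0.le hFt
  have hy2 : ‖y‖ ^ 2 ≤ (K * ‖z‖) ^ 2 :=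
    pow_le_pow_left₀ (norm_nonneg y) hy 2
  have key : Gpd p δ x y ≤ (K * ‖z‖) ^ 2 *
      (K ^ (p - 2) * (t ^ δ * (1 + t) ^ (1 - δ)) ^ (p - 2)) := by
    unfold Gpd
    rw [show 1 + ‖x‖ + ‖y‖ = (1 + s) by rw [hs]; ring]
    exact mul_le_mul hy2 hpow (Real.rpow_nonneg hFs _) (by positivity)
  have hKp : K ^ (2:ℕ) * K ^ (p - 2) = K ^ p := by
    rw [← Real.rpow_natCast K 2, ← Real.rpow_add hK0]; norm_num
  calc Gpd p δ x y ≤ (K * ‖z‖) ^ 2 *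
        (K ^ (p - 2) * (t ^ δ * (1 + t) ^ (1 - δ)) ^ (p - 2)) := key
    _ = (K ^ (2:ℕ) * K ^ (p - 2)) * (‖z‖ ^ 2 * (t ^ δ * (1 + t) ^ (1 - δ)) ^ (p - 2)) := by
        ring
    _ = K ^ p * Gpd p δ x' z := by
        rw [hKp]
        unfold Gpd
        rw [show 1 + ‖x'‖ + ‖z‖ = (1 + t) by rw [ht]; ring]

/-- Combinatorial lemma (Lemma 7.4): pairwise differences are controlled by
consecutive differences with minimized weights. -/
theorem Gpd_combinatorial_estimate (p δ : ℝ) (hp : 2 ≤ p) (hδ : δ ∈ Set.Icc (0:ℝ) 1)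
    (d k : ℕ) (hk : 0 < k) :
    ∃ C > 0, ∀ a : ℕ → EuclideanSpace ℝ (Fin d),
      ∑ j ∈ Finset.range k, ∑ l ∈ Finset.range j, Gpd p δ (a j) (a j - a l) ≤
        C * ∑ j ∈ Finset.range (k - 1),
          (Finset.range k).inf' (Finset.nonempty_range_iff.mpr hk.ne')
            (fun m => Gpd p δ (a m) (a (j + 1) - a j)) := by
  obtain ⟨hδ0, hδ1⟩ := hδ
  have hk0 : (0:ℝ) < (k:ℝ) := by exact_mod_cast hk
  refine ⟨(2 * (k:ℝ)) ^ p * (k:ℝ) ^ 2,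
    mul_pos (Real.rpow_pos_of_pos (by linarith) p) (by positivity), ?_⟩
  intro a
  set S : ℝ := ∑ j ∈ Finset.range (k - 1),
      (Finset.range k).inf' (Finset.nonempty_range_iff.mpr hk.ne')
        (fun m => Gpd p δ (a m) (a (j + 1) - a j)) with hS
  have hS0 : 0 ≤ S := by
    apply Finset.sum_nonneg
    intro i _
    exact Finset.le_inf' _ _ (fun m _ => Gpd_nonneg p δ _ _)
  rcases Nat.lt_or_ge k 2 with h2 | h2
  · have hLHS : ∑ j ∈ Finset.range k, ∑ l ∈ Finset.range j, Gpd p δ (a j) (a j - a l) = 0 := by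
      rw [show k = 1 by omega]; simp
    rw [hLHS]
    have : (0:ℝ) < 2 * (k:ℝ) := by linarith
    have := (Real.rpow_pos_of_pos this p).le
    positivity
  -- now k ≥ 2
  have hk1 : (1:ℝ) ≤ (k:ℝ) := by exact_mod_cast hk
  have hkm1 : 0 < k - 1 := by omega
  obtain ⟨i0, hi0mem, hi0max⟩ := Finset.exists_max_image (Finset.range (k - 1))
    (fun i => ‖a (i + 1) - a i‖) ⟨0, Finset.mem_range.mpr hkm1⟩
  set M : ℝ := ‖a (i0 + 1) - a i0‖ with hM
  have hM0 : 0 ≤ M := norm_nonneg _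
  -- telescoping
  have htel : ∀ s t : ℕ, t ≤ s → a s - a t = ∑ i ∈ Finset.Ico t s, (a (i + 1) - a i) := by
    intro s t h
    rw [Finset.sum_Ico_eq_sub _ h, Finset.sum_range_sub, Finset.sum_range_sub]
    abel
  have hdiff : ∀ s t : ℕ, s < k → t ≤ s → ‖a s - a t‖ ≤ (k:ℝ) * M := by
    intro s t hs hts
    rw [htel s t hts]
    calc ‖∑ i ∈ Finset.Ico t s, (a (i + 1) - a i)‖
        ≤ ∑ i ∈ Finset.Ico t s, ‖a (i + 1) - a i‖ := norm_sum_le _ _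
      _ ≤ (Finset.Ico t s).card • M := by
          apply Finset.sum_le_card_nsmul
          intro i hi
          have hi' : i < k - 1 := by
            have := (Finset.mem_Ico.mp hi).2
            omega
          exact hi0max i (Finset.mem_range.mpr hi')
      _ = ((s - t : ℕ) : ℝ) * M := by rw [Nat.card_Ico, nsmul_eq_mul]
      _ ≤ (k:ℝ) * M := by
          apply mul_le_mul_of_nonneg_right _ hM0
          exact_mod_cast Nat.le_of_lt (by omega)
  have hdiff' : ∀ s t : ℕ, s < k → t < k → ‖a s - a t‖ ≤ (k:ℝ) * M := by
    intro s t hs ht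
    rcases le_total t s with h | h
    · exact hdiff s t hs h
    · rw [norm_sub_rev]; exact hdiff t s ht h
  -- key per-term estimate
  have key : ∀ j ∈ Finset.range k, ∀ l ∈ Finset.range j,
      Gpd p δ (a j) (a j - a l) ≤ (2 * (k:ℝ)) ^ p * S := by
    intro j hj l hl
    have hjk : j < k := Finset.mem_range.mp hj
    have hlj : l < j := Finset.mem_range.mp hl
    obtain ⟨m0, hm0, hm0eq⟩ := Finset.exists_mem_eq_inf'
      (Finset.nonempty_range_iff.mpr hk.ne')
      (fun m => Gpd p δ (a m) (a (i0 + 1) - a i0))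
    have hm0k : m0 < k := Finset.mem_range.mp hm0
    have h1 : ‖a j - a l‖ ≤ (k:ℝ) * M := hdiff' j l hjk (lt_trans hlj hjk)
    have h2 : ‖a j - a m0‖ ≤ (k:ℝ) * M := hdiff' j m0 hjk hm0k
    have h3 : ‖a j‖ ≤ ‖a m0‖ + (k:ℝ) * M := by
      have := norm_sub_norm_le (a j) (a m0)
      linarith
    have hstep : Gpd p δ (a j) (a j - a l) ≤
        (2 * (k:ℝ)) ^ p * Gpd p δ (a m0) (a (i0 + 1) - a i0) := by
      apply Gpd_le_mul p δ hp hδ0 hδ1 _ _ _ _ _ (by linarith)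
      · rw [← hM]; nlinarith [norm_nonneg (a (i0+1) - a i0)]
      · rw [← hM]
        have h4 : (0:ℝ) ≤ ‖a m0‖ := norm_nonneg _
        nlinarith
    have hinf : Gpd p δ (a m0) (a (i0 + 1) - a i0) ≤ S := by
      have heq : (Finset.range k).inf' (Finset.nonempty_range_iff.mpr hk.ne')
          (fun m => Gpd p δ (a m) (a (i0 + 1) - a i0))
          = Gpd p δ (a m0) (a (i0 + 1) - a i0) := hm0eq
      rw [hS, ← heq]
      apply Finset.single_le_sum (f := fun i => (Finset.range k).inf'
        (Finset.nonempty_range_iff.mpr hk.ne')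
        (fun m => Gpd p δ (a m) (a (i + 1) - a i)))
        (fun i _ => Finset.le_inf' _ _ (fun m _ => Gpd_nonneg p δ _ _)) hi0mem
    calc Gpd p δ (a j) (a j - a l)
        ≤ (2 * (k:ℝ)) ^ p * Gpd p δ (a m0) (a (i0 + 1) - a i0) := hstep
      _ ≤ (2 * (k:ℝ)) ^ p * S := by
          apply mul_le_mul_of_nonneg_left hinf
          exact (Real.rpow_pos_of_pos (by linarith) p).le
  have h2kp : (0:ℝ) ≤ (2 * (k:ℝ)) ^ p * S :=
    mul_nonneg (Real.rpow_pos_of_pos (by linarith) p).le hS0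
  calc ∑ j ∈ Finset.range k, ∑ l ∈ Finset.range j, Gpd p δ (a j) (a j - a l)
      ≤ ∑ j ∈ Finset.range k, ∑ _l ∈ Finset.range j, (2 * (k:ℝ)) ^ p * S :=
        Finset.sum_le_sum (fun j hj => Finset.sum_le_sum (fun l hl => key j hj l hl))
    _ = ∑ j ∈ Finset.range k, (j : ℝ) * ((2 * (k:ℝ)) ^ p * S) := by
        simp [Finset.sum_const, nsmul_eq_mul]
    _ ≤ ∑ _j ∈ Finset.range k, (k : ℝ) * ((2 * (k:ℝ)) ^ p * S) := by
        apply Finset.sum_le_sum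
        intro j hj
        apply mul_le_mul_of_nonneg_right _ h2kp
        exact_mod_cast (Finset.mem_range.mp hj).le
    _ = (k:ℝ) * ((k:ℝ) * ((2 * (k:ℝ)) ^ p * S)) := by
        simp [Finset.sum_const, Finset.card_range, nsmul_eq_mul]
    _ = (2 * (k:ℝ)) ^ p * (k:ℝ) ^ 2 * S := by ring
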